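/- Let $V$ be a finite-dimensional $k$-vector space, let $0 < a_1 < \cdots < a_r \le \dim V$, and let $E_1 \subseteq \cdots \subseteq E_r \subseteq V$ and $F_1 \subseteq \cdots \subseteq F_r \subseteq V$ be two flags with $\dim E_i = \dim F_i = a_i$ for all $i$. Then there exists a flag $G_1 \subseteq \cdots \subseteq G_r \subseteq V \times V$ with $\dim G_i = a_i$, $p_1(G_i) = E_i$ and $p_2(G_i) = F_i$ for all $i$. -/

import Mathlib

/-!
Pick sequences `e, f : ℕ → V` such that for every `i` the first `a i` terms of `e` span `E i`
and the first `a i` terms of `f` span `F i`; such a sequence is built along the flag by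
extending a spanning prefix of `E (i - 1)` with a spanning family of a complement of `E (i - 1)`
in `E i`. Then `G i`, spanned by the first `a i` pairs `(e j, f j)`, projects onto `E i` and
`F i`, and has dimension `a i`: at most `a i` because of its `a i` generators, at least `a i`
because it surjects onto `E i`.
-/

open Set Submodule Module

theorem Nat.Iio_add_eq_Iio_union_image_const_add (m d : ℕ) :
    Iio (m + d) = Iio m ∪ (m + ·) '' Iio d := by
  ext j
  simp only [mem_Iio, mem_union, mem_image]
  constructor
  · intro hj
    by_cases hjm : j < m
    · exact .inl hjm
    · exact .inr ⟨j - m, by omega, by omega⟩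
  · rintro (_ | ⟨i, _, rfl⟩) <;> omega

section

variable {R M N ι : Type*} [Ring R] [AddCommGroup M] [AddCommGroup N] [Module R M] [Module R N]

theorem map_fst_span_image_prod (e : ι → M) (f : ι → N) (s : Set ι) :
    (span R ((fun j => (e j, f j)) '' s)).map (LinearMap.fst R M N) = span R (e '' s) := by
  rw [map_span, image_image]; rfl

theorem map_snd_span_image_prod (e : ι → M) (f : ι → N) (s : Set ι) :
    (span R ((fun j => (e j, f j)) '' s)).map (LinearMap.snd R M N) = span R (f '' s) := by
  rw [map_span, image_image]; rfl

theorem finrank_span_image_Iio_le [StrongRankCondition R] (e : ℕ → M) (m : ℕ) :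
    finrank R (span R (e '' Iio m)) ≤ m := by
  rw [← Fin.range_val, ← range_comp]
  simpa [Set.finrank] using finrank_range_le_card (R := R) (e ∘ Fin.val : Fin m → M)

end

section

variable {k V : Type*} [Field k] [AddCommGroup V] [Module k V]

def SpansByPrefix (e : ℕ → V) (W : Submodule k V) : Prop :=
  span k (e '' Iio (finrank k W)) = W

variable [FiniteDimensional k V]

theorem Submodule.exists_sup_eq_finrank_add_eq {U W : Submodule k V} (hUW : U ≤ W) :
    ∃ D : Submodule k V, U ⊔ D = W ∧ finrank k U + finrank k D = finrank k W := by
  obtain ⟨C, hC⟩ := U.exists_isCompl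
  have hsup : U ⊔ C ⊓ W = W := by
    rw [← sup_inf_assoc_of_le C hUW, hC.sup_eq_top, top_inf_eq]
  refine ⟨C ⊓ W, hsup, ?_⟩
  have h := finrank_sup_add_finrank_inf_eq U (C ⊓ W)
  rwa [hsup, ← inf_assoc, hC.inf_eq_bot, bot_inf_eq, finrank_bot, add_zero, eq_comm] at h

theorem exists_spansByPrefix (D : Submodule k V) : ∃ c : ℕ → V, SpansByPrefix c D := by
  let b := finBasis k D
  refine ⟨fun j => if h : j < finrank k D then (b ⟨j, h⟩ : V) else 0, ?_⟩
  have hb : (fun j => if h : j < finrank k D then (b ⟨j, h⟩ : V) else 0) ∘ Fin.val =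
      D.subtype ∘ b := by
    funext j; simp [j.isLt]
  rw [SpansByPrefix, ← Fin.range_val, ← range_comp, hb, range_comp, ← map_span, b.span_eq,
    Submodule.map_top, range_subtype]

theorem SpansByPrefix.exists_extend {e : ℕ → V} {U W : Submodule k V} (he : SpansByPrefix e U)
    (hUW : U ≤ W) : ∃ e' : ℕ → V, EqOn e' e (Iio (finrank k U)) ∧ SpansByPrefix e' W := by
  obtain ⟨D, hsup, hdim⟩ := exists_sup_eq_finrank_add_eq hUW
  obtain ⟨c, hc⟩ := exists_spansByPrefix D
  set m := finrank k U
  let e' j := if j < m then e j else c (j - m)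
  have hagree : EqOn e' e (Iio m) := fun j hj => if_pos hj
  refine ⟨e', hagree, ?_⟩
  have hshift : e' ∘ (m + ·) = c := by
    funext j; simp [e']
  unfold SpansByPrefix at he hc ⊢
  rw [← hdim, Nat.Iio_add_eq_Iio_union_image_const_add, image_union, span_union, hagree.image_eq,
    ← image_comp, hshift, he, hc, hsup]

theorem SpansByPrefix.exists_extend_of_monotone {e : ℕ → V} {U : Submodule k V}
    (he : SpansByPrefix e U) : ∀ {n : ℕ} {E : Fin n → Submodule k V}, Monotone E →
      (∀ i, U ≤ E i) →
        ∃ e' : ℕ → V, EqOn e' e (Iio (finrank k U)) ∧ ∀ i, SpansByPrefix e' (E i) := by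
  intro n
  induction n generalizing e U with
  | zero => exact fun _ _ => ⟨e, eqOn_refl _ _, fun i => i.elim0⟩
  | succ n ih =>
    intro E hE hUE
    obtain ⟨e₀, he₀e, he₀⟩ := he.exists_extend (hUE 0)
    obtain ⟨e', he'e₀, he'⟩ := ih he₀ (E := Fin.tail E)
      (hE.comp Fin.strictMono_succ.monotone) (fun i => hE (Fin.zero_le i.succ))
    have hUE₀ : Iio (finrank k U) ⊆ Iio (finrank k (E 0)) :=
      Iio_subset_Iio (finrank_mono (hUE 0))
    refine ⟨e', (he'e₀.mono hUE₀).trans he₀e, Fin.cases ?_ he'⟩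
    rwa [SpansByPrefix, he'e₀.image_eq]

theorem Monotone.exists_spansByPrefix {n : ℕ} {E : Fin n → Submodule k V} (hE : Monotone E) :
    ∃ e : ℕ → V, ∀ i, SpansByPrefix e (E i) := by
  have h0 : SpansByPrefix (0 : ℕ → V) (⊥ : Submodule k V) := by simp [SpansByPrefix]
  obtain ⟨e, -, he⟩ := h0.exists_extend_of_monotone hE (fun _ => bot_le)
  exact ⟨e, he⟩

end

theorem exists_flag_over_pair_general {k V : Type*} [Field k] [AddCommGroup V] [Module k V]
    [FiniteDimensional k V] {n : ℕ} (a : Fin (n + 1) → ℕ)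
    (E F : Fin (n + 1) → Submodule k V) (hEmono : Monotone E) (hFmono : Monotone F)
    (hEdim : ∀ i, Module.finrank k (E i) = a i) (hFdim : ∀ i, Module.finrank k (F i) = a i) :
    ∃ G : Fin (n + 1) → Submodule k (V × V),
      Monotone G ∧ ∀ i, Module.finrank k (G i) = a i ∧
        Submodule.map (LinearMap.fst k V V) (G i) = E i ∧
        Submodule.map (LinearMap.snd k V V) (G i) = F i := by
  obtain ⟨e, he⟩ := hEmono.exists_spansByPrefix
  obtain ⟨f, hf⟩ := hFmono.exists_spansByPrefix
  let G i := span k ((fun j => (e j, f j)) '' Iio (a i))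
  have hG_fst : ∀ i, (G i).map (LinearMap.fst k V V) = E i := fun i => by
    rw [map_fst_span_image_prod, ← hEdim]
    exact he i
  have hG_snd : ∀ i, (G i).map (LinearMap.snd k V V) = F i := fun i => by
    rw [map_snd_span_image_prod, ← hFdim]
    exact hf i
  have ha : Monotone a := fun i j hij => hEdim i ▸ hEdim j ▸ finrank_mono (hEmono hij)
  refine ⟨G, fun i j hij => span_mono (image_mono (Iio_subset_Iio (ha hij))),
    fun i => ⟨le_antisymm (finrank_span_image_Iio_le _ _) ?_, hG_fst i, hG_snd i⟩⟩
  calc a i = finrank k (E i) := (hEdim i).symm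
    _ ≤ finrank k (G i) := hG_fst i ▸ finrank_map_le _ _

/-- **Nonemptiness of the fibers (surjectivity of `p`).** Given two flags
`E₁ ⊆ ⋯ ⊆ E_r` and `F₁ ⊆ ⋯ ⊆ F_r` of type `(a₁ < ⋯ < a_r)` in a finite-dimensional
vector space `V`, there exists a flag `G₁ ⊆ ⋯ ⊆ G_r ⊆ V × V` with `dim G_i = a_i`,
`p₁(G_i) = E_i` and `p₂(G_i) = F_i` for all `i`. -/
theorem exists_flag_over_pair {k V : Type*} [Field k] [AddCommGroup V] [Module k V]
    [FiniteDimensional k V] {n : ℕ} (a : Fin (n + 1) → ℕ)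
    (ha : StrictMono a) (ha0 : 0 < a 0) (han : a (Fin.last n) ≤ Module.finrank k V)
    (E F : Fin (n + 1) → Submodule k V) (hEmono : Monotone E) (hFmono : Monotone F)
    (hEdim : ∀ i, Module.finrank k (E i) = a i) (hFdim : ∀ i, Module.finrank k (F i) = a i) :
    ∃ G : Fin (n + 1) → Submodule k (V × V),
      Monotone G ∧ ∀ i, Module.finrank k (G i) = a i ∧
        Submodule.map (LinearMap.fst k V V) (G i) = E i ∧
        Submodule.map (LinearMap.snd k V V) (G i) = F i :=
  exists_flag_over_pair_general a E F hEmono hFmono hEdim hFdim
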